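/- Let X be a separable Banach space containing a complemented subspace isomorphic to ℓ¹(ℕ) (i.e., there exist continuous linear maps i : ℓ¹(ℕ) → X and p : X → ℓ¹(ℕ) with p ∘ i = id). Then there exists an ergodic operator T on X that satisfies condition (NSE), i.e., an ergodic operator on X that is not super-ergodic. -/

import Mathlib

open Filter Topology

/-- The `n`-th Cesàro mean `A_n = (1/n) ∑_{k<n} T^k` of an operator `T`. -/
noncomputable def cesaroMean {X : Type*} [NormedAddCommGroup X] [NormedSpace ℝ X]
    (T : X →L[ℝ] X) (n : ℕ) : X →L[ℝ] X :=
  (n : ℝ)⁻¹ • ∑ k ∈ Finset.range n, T ^ k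

/-- The strong operator topology on `L(X)`: the topology of pointwise convergence,
induced from the product topology on `X → X`. -/
def sot (X : Type*) [NormedAddCommGroup X] [NormedSpace ℝ X] : TopologicalSpace (X →L[ℝ] X) :=
  TopologicalSpace.induced (fun T => (T : X → X)) Pi.topologicalSpace

/-- `T` is Cesàro-bounded if the norms of its Cesàro means are uniformly bounded. -/
def CesaroBounded {X : Type*} [NormedAddCommGroup X] [NormedSpace ℝ X]
    (T : X →L[ℝ] X) : Prop :=
  ∃ M : ℝ, ∀ n : ℕ, ‖cesaroMean T n‖ ≤ M

/-- `T` is ergodic if for every `x` the sequence of Cesàro means at `x` converges in norm. -/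
def IsErgodicOp {X : Type*} [NormedAddCommGroup X] [NormedSpace ℝ X]
    (T : X →L[ℝ] X) : Prop :=
  ∀ x : X, ∃ y : X, Tendsto (fun n => cesaroMean T n x) atTop (𝓝 y)

/-- `T` is uniformly ergodic if the sequence of Cesàro means converges in operator norm. -/
def IsUniformlyErgodicOp {X : Type*} [NormedAddCommGroup X] [NormedSpace ℝ X]
    (T : X →L[ℝ] X) : Prop :=
  ∃ L : X →L[ℝ] X, Tendsto (fun n => cesaroMean T n) atTop (𝓝 L)

/-- Condition (NSE): there are `ε > 0` and a strictly increasing sequence `j` such that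
for every `m` some `x` in the unit ball satisfies `‖A_{j_p} x - A_{j_{p+1}} x‖ > ε`
for all `p ≤ m`. -/
def NSE {X : Type*} [NormedAddCommGroup X] [NormedSpace ℝ X]
    (T : X →L[ℝ] X) : Prop :=
  ∃ ε > (0 : ℝ), ∃ j : ℕ → ℕ, StrictMono j ∧
    ∀ m : ℕ, ∃ x : X, ‖x‖ ≤ 1 ∧
      ∀ p ≤ m, ε < ‖cesaroMean T (j p) x - cesaroMean T (j (p + 1)) x‖

/-- The tree `𝒜_e(T, ε)`: finite strictly increasing sequences `s` of naturals such that
`|s| ≤ 1` or some `x` in the unit ball satisfies `‖A_{s_p} x - A_{s_{p+1}} x‖ > ε`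
for all consecutive pairs of entries of `s`. -/
def ergoTree {X : Type*} [NormedAddCommGroup X] [NormedSpace ℝ X]
    (T : X →L[ℝ] X) (ε : ℝ) : Set (List ℕ) :=
  {s | s.Chain' (· < ·) ∧ (s.length ≤ 1 ∨ ∃ x : X, ‖x‖ ≤ 1 ∧
    ∀ p : ℕ, p + 1 < s.length →
      ε < ‖cesaroMean T (s.getD p 0) x - cesaroMean T (s.getD (p + 1) 0) x‖)}

/-- A tree on `ℕ` (a set of finite sequences) is well-founded if it has no infinite branch. -/
def TreeWF (𝒜 : Set (List ℕ)) : Prop :=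
  ¬ ∃ J : ℕ → ℕ, ∀ m : ℕ, (List.range m).map J ∈ 𝒜

/-- The relation "is a proper extension of", restricted to the nodes of the tree `𝒜`. -/
def treeRel (𝒜 : Set (List ℕ)) : List ℕ → List ℕ → Prop :=
  fun t s => s ∈ 𝒜 ∧ t ∈ 𝒜 ∧ s <+: t ∧ s ≠ t

open Classical in
/-- The height of a well-founded tree: the ordinal rank of the relation
"is a proper extension of" on its nodes, evaluated at the empty sequence
(and `0` by convention if that relation is not well-founded). -/
noncomputable def treeHeight (𝒜 : Set (List ℕ)) : Ordinal :=
  if h : WellFounded (treeRel 𝒜) then (h.apply []).rank else 0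

/-!
The backward shift `B` on `ℓ¹` is ergodic: `‖Bᵏ f‖` is a tail sum of `f`, so `Bᵏ f → 0`, and
Cesàro means of a null sequence are null. It is far from super-ergodic: for `2n ≤ M`, the means
`Aₙ e_M` and `A₂ₙ e_M` equal `1/n` and `1/(2n)` on the `n` coordinates `(M - n, M]`, so they are
`1/2` apart, and `M = 2^(m+1)` serves all dyadic pairs `(2^q, 2^(q+1))` with `q ≤ m` at once.
Both properties survive the transfer to `X` by `i B p + (1 - i p)`, whose Cesàro means are
`i Aₙ p + (1 - i p)` for `n ≥ 1`.
-/

local notation "ℓ¹" => lp (fun _ : ℕ => ℝ) 1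

section CesaroMean

variable {X : Type*} [NormedAddCommGroup X] [NormedSpace ℝ X]

lemma cesaroMean_apply (T : X →L[ℝ] X) (n : ℕ) (x : X) :
    cesaroMean T n x = (n : ℝ)⁻¹ • ∑ k ∈ Finset.range n, (T ^ k) x := by
  simp [cesaroMean]

lemma tendsto_cesaroMean_apply_of_tendsto_pow_apply {T : X →L[ℝ] X} {x y : X}
    (h : Tendsto (fun k => (T ^ k) x) atTop (𝓝 y)) :
    Tendsto (fun n => cesaroMean T n x) atTop (𝓝 y) := by
  simpa only [cesaroMean_apply] using h.cesaro_smul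

end CesaroMean

section ExtendById

variable {E X : Type*} [NormedAddCommGroup E] [NormedSpace ℝ E]
  [NormedAddCommGroup X] [NormedSpace ℝ X] {i : E →L[ℝ] X} {p : X →L[ℝ] E}

/-- When `p ∘ i = id`, so that `X = range i ⊕ ker p`, this is `S` transported to `range i` and
extended by the identity on `ker p`. -/
def extendById (i : E →L[ℝ] X) (p : X →L[ℝ] E) (S : E →L[ℝ] E) : X →L[ℝ] X :=
  i ∘L S ∘L p + (ContinuousLinearMap.id ℝ X - i ∘L p)

lemma extendById_pow_apply (hpi : ∀ y, p (i y) = y) (S : E →L[ℝ] E) (k : ℕ) (x : X) :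
    (extendById i p S ^ k) x = i ((S ^ k) (p x)) + (x - i (p x)) := by
  induction k generalizing x with
  | zero => simp
  | succ k ih =>
    have hp : p (extendById i p S x) = S (p x) := by simp [extendById, hpi]
    rw [pow_succ, mul_apply_eq_comp, ih, hp, ← mul_apply_eq_comp, ← pow_succ]
    simp only [extendById, add_apply, ContinuousLinearMap.comp_apply,
      sub_apply, ContinuousLinearMap.id_apply]
    abel

lemma cesaroMean_extendById_apply (hpi : ∀ y, p (i y) = y) (S : E →L[ℝ] E) {n : ℕ} (hn : n ≠ 0)
    (x : X) : cesaroMean (extendById i p S) n x = i (cesaroMean S n (p x)) + (x - i (p x)) := by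
  simp only [cesaroMean_apply, extendById_pow_apply hpi, Finset.sum_add_distrib, ← map_sum,
    Finset.sum_const, Finset.card_range, smul_add, map_smul, ← Nat.cast_smul_eq_nsmul ℝ, smul_smul,
    inv_mul_cancel₀ (Nat.cast_ne_zero.2 hn : (n : ℝ) ≠ 0), one_smul]

lemma cesaroMean_extendById_sub_apply (hpi : ∀ y, p (i y) = y) (S : E →L[ℝ] E) {n n' : ℕ}
    (hn : n ≠ 0) (hn' : n' ≠ 0) (x : X) :
    cesaroMean (extendById i p S) n x - cesaroMean (extendById i p S) n' x =
      i (cesaroMean S n (p x) - cesaroMean S n' (p x)) := by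
  rw [cesaroMean_extendById_apply hpi S hn, cesaroMean_extendById_apply hpi S hn', map_sub]
  abel

lemma IsErgodicOp.extendById (hpi : ∀ y, p (i y) = y) {S : E →L[ℝ] E} (hS : IsErgodicOp S) :
    IsErgodicOp (extendById i p S) := by
  intro x
  obtain ⟨y, hy⟩ := hS (p x)
  refine ⟨i y + (x - i (p x)), ((i.continuous.tendsto y).comp hy).add_const _ |>.congr' ?_⟩
  filter_upwards [eventually_ne_atTop 0] with n hn
  exact (cesaroMean_extendById_apply hpi S hn x).symm

lemma NSE.extendById (hpi : ∀ y, p (i y) = y) {S : E →L[ℝ] E} (hS : NSE S) :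
    NSE (extendById i p S) := by
  obtain ⟨ε, hε, j, hj, hS⟩ := hS
  have hj0 : ∀ q, j (q + 1) ≠ 0 := fun q => (Nat.zero_le _).trans_lt (hj (Nat.lt_succ_self q)) |>.ne'
  set c := (‖i‖ + 1)⁻¹
  refine ⟨c * ε / (‖p‖ + 1), by positivity, fun q => j (q + 1), fun _ _ h => hj (by omega),
    fun m => ?_⟩
  obtain ⟨y, hy, hdiff⟩ := hS (m + 1)
  refine ⟨c • i y, ?_, fun q hq => ?_⟩
  · calc ‖c • i y‖ = c * ‖i y‖ := by rw [norm_smul, Real.norm_of_nonneg (by positivity)]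
      _ ≤ c * (‖i‖ + 1) := by gcongr; nlinarith [i.le_opNorm y, norm_nonneg i]
      _ = 1 := inv_mul_cancel₀ (by positivity)
  · set d := cesaroMean S (j (q + 1)) y - cesaroMean S (j (q + 1 + 1)) y
    have hd : ‖d‖ ≤ (‖p‖ + 1) * ‖i d‖ :=
      calc ‖d‖ = ‖p (i d)‖ := by rw [hpi]
        _ ≤ ‖p‖ * ‖i d‖ := p.le_opNorm _
        _ ≤ (‖p‖ + 1) * ‖i d‖ := by gcongr; linarith
    have hTd : cesaroMean (_root_.extendById i p S) (j (q + 1)) (c • i y)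
        - cesaroMean (_root_.extendById i p S) (j (q + 1 + 1)) (c • i y) = c • i d := by
      rw [cesaroMean_extendById_sub_apply hpi S (hj0 q) (hj0 (q + 1)), map_smul, hpi, map_smul,
        map_smul, ← smul_sub, map_smul]
    rw [hTd, norm_smul, Real.norm_of_nonneg (by positivity), mul_div_assoc]
    gcongr
    rw [div_lt_iff₀ (by positivity)]
    exact (hdiff (q + 1) (by omega)).trans_le (by linarith)

end ExtendById

lemma ell1_norm_eq_tsum (f : ℓ¹) : ‖f‖ = ∑' n, ‖f n‖ := by
  simpa using lp.norm_eq_tsum_rpow (by norm_num) f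

lemma summable_norm_ell1 (f : ℓ¹) : Summable fun n => ‖f n‖ := by
  simpa using (lp.memℓp f).summable (by norm_num)

lemma memℓp_one_comp_add (f : ℓ¹) (k : ℕ) : Memℓp (fun n => f (n + k)) 1 :=
  memℓp_gen (by simpa using (summable_nat_add_iff k).2 (summable_norm_ell1 f))

def backwardShiftₗ : ℓ¹ →ₗ[ℝ] ℓ¹ where
  toFun f := ⟨fun n => f (n + 1), memℓp_one_comp_add f 1⟩
  map_add' _ _ := rfl
  map_smul' _ _ := rfl

noncomputable def backwardShift : ℓ¹ →L[ℝ] ℓ¹ :=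
  backwardShiftₗ.mkContinuous 1 fun f => by
    rw [one_mul, ell1_norm_eq_tsum, ell1_norm_eq_tsum]
    exact Summable.tsum_le_tsum_of_inj (· + 1) (add_left_injective 1) (fun _ _ => norm_nonneg _)
      (fun _ => le_rfl) ((summable_nat_add_iff 1).2 (summable_norm_ell1 f)) (summable_norm_ell1 f)

lemma backwardShift_pow_apply (k : ℕ) (f : ℓ¹) (n : ℕ) : (backwardShift ^ k) f n = f (n + k) := by
  induction k generalizing f with
  | zero => simp
  | succ k ih => rw [pow_succ, mul_apply_eq_comp, ih]; rfl

lemma tendsto_backwardShift_pow_apply (f : ℓ¹) :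
    Tendsto (fun k => (backwardShift ^ k) f) atTop (𝓝 0) := by
  rw [tendsto_zero_iff_norm_tendsto_zero]
  simpa only [ell1_norm_eq_tsum, backwardShift_pow_apply] using
    tendsto_sum_nat_add fun n => ‖f n‖

lemma isErgodicOp_backwardShift : IsErgodicOp backwardShift :=
  fun f => ⟨0, tendsto_cesaroMean_apply_of_tendsto_pow_apply (tendsto_backwardShift_pow_apply f)⟩

lemma cesaroMean_backwardShift_apply (n : ℕ) (f : ℓ¹) (q : ℕ) :
    cesaroMean backwardShift n f q = (n : ℝ)⁻¹ * ∑ k ∈ Finset.range n, f (q + k) := by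
  simp only [cesaroMean_apply, lp.coeFn_smul, lp.coeFn_sum, Pi.smul_apply, Finset.sum_apply,
    backwardShift_pow_apply, smul_eq_mul]

lemma cesaroMean_backwardShift_single_apply {n M q : ℕ} (hqM : q ≤ M) (hMq : M < q + n) :
    cesaroMean backwardShift n (lp.single 1 M 1) q = (n : ℝ)⁻¹ := by
  have hsingle : ∀ k, (lp.single 1 M 1 : ℓ¹) (q + k) = if M - q = k then 1 else 0 := fun k => by
    rw [lp.single_apply, Pi.single_apply]
    exact if_congr (by omega) rfl rfl
  rw [cesaroMean_backwardShift_apply, Finset.sum_congr rfl fun k _ => hsingle k,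
    Finset.sum_ite_eq, if_pos (Finset.mem_range.2 (by omega)), mul_one]

lemma half_le_norm_cesaroMean_backwardShift_single_sub {n M : ℕ} (hn : n ≠ 0) (hnM : 2 * n ≤ M) :
    1 / 2 ≤ ‖cesaroMean backwardShift n (lp.single 1 M 1)
      - cesaroMean backwardShift (2 * n) (lp.single 1 M 1)‖ := by
  set d := cesaroMean backwardShift n (lp.single 1 M 1)
    - cesaroMean backwardShift (2 * n) (lp.single 1 M 1)
  have hd : ∀ q ∈ Finset.Ioc (M - n) M, ‖d q‖ = (2 * n : ℝ)⁻¹ := fun q hq => by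
    rw [Finset.mem_Ioc] at hq
    rw [lp.coeFn_sub, Pi.sub_apply, cesaroMean_backwardShift_single_apply hq.2 (by omega),
      cesaroMean_backwardShift_single_apply hq.2 (by omega)]
    have hn' : (n : ℝ) ≠ 0 := Nat.cast_ne_zero.2 hn
    have hsub : (n : ℝ)⁻¹ - ((2 * n : ℕ) : ℝ)⁻¹ = (2 * n : ℝ)⁻¹ := by push_cast; field_simp; ring
    rw [hsub, Real.norm_of_nonneg (by positivity)]
  calc (1 / 2 : ℝ) = ∑ q ∈ Finset.Ioc (M - n) M, ‖d q‖ := by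
        rw [Finset.sum_congr rfl hd, Finset.sum_const, Nat.card_Ioc, Nat.sub_sub_self (by omega),
          nsmul_eq_mul]
        field_simp
    _ ≤ ‖d‖ := by simpa using lp.sum_rpow_le_norm_rpow (by norm_num) d (Finset.Ioc (M - n) M)

lemma nse_backwardShift : NSE backwardShift := by
  refine ⟨1 / 4, by norm_num, fun q => 2 ^ q, pow_right_strictMono₀ one_lt_two, fun m => ?_⟩
  refine ⟨lp.single 1 (2 ^ (m + 1)) 1, by simp [lp.norm_single], fun q hq => ?_⟩
  have hle : 2 * 2 ^ q ≤ 2 ^ (m + 1) := by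
    rw [← pow_succ']; exact Nat.pow_le_pow_right two_pos (by omega)
  have := half_le_norm_cesaroMean_backwardShift_single_sub (pow_ne_zero q two_ne_zero) hle
  rw [← pow_succ'] at this
  linarith

theorem stmt_16_general (X : Type*) [NormedAddCommGroup X] [NormedSpace ℝ X]
    (i : lp (fun _ : ℕ => ℝ) 1 →L[ℝ] X) (p : X →L[ℝ] lp (fun _ : ℕ => ℝ) 1)
    (hpi : ∀ y : lp (fun _ : ℕ => ℝ) 1, p (i y) = y) :
    ∃ T : X →L[ℝ] X, IsErgodicOp T ∧ NSE T :=
  ⟨extendById i p backwardShift, isErgodicOp_backwardShift.extendById hpi,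
    nse_backwardShift.extendById hpi⟩

/-- If a separable Banach space `X` contains a complemented copy of `ℓ¹(ℕ)`, then there is an
ergodic operator on `X` satisfying (NSE), i.e., ergodic but not super-ergodic. -/
theorem stmt_16 (X : Type*) [NormedAddCommGroup X] [NormedSpace ℝ X] [CompleteSpace X]
    [TopologicalSpace.SeparableSpace X]
    (i : lp (fun _ : ℕ => ℝ) 1 →L[ℝ] X) (p : X →L[ℝ] lp (fun _ : ℕ => ℝ) 1)
    (hpi : ∀ y : lp (fun _ : ℕ => ℝ) 1, p (i y) = y) :
    ∃ T : X →L[ℝ] X, IsErgodicOp T ∧ NSE T :=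
  stmt_16_general X i p hpi
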